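/- Let w₁ ≥ w₂ ≥ ... ≥ w_e be the edge weights of a finite directed graph G sorted in descending order, and let G_k denote the subgraph consisting of the k edges with the largest weights (the first k edges in the sorted order). If k* is the smallest index such that j is reachable from i in G_{k*}, then the total effect T(i,j) equals w_{k*}. -/

import Mathlib

/-!
Every path from `i` to `j` must use an edge outside the first `k` edges (otherwise `j` would be
reachable earlier), and by sortedness such an edge weighs at most `w_k`; so no path has bottleneck
above `w_k`. A path inside the first `k + 1` edges has all its weights at least `w_k`, so it
attains this bound.
-/

open Classical

variable {V : Type*} [Fintype V]

/-- `p` is a directed path (nonempty list of consecutive edges) from `i` to `j`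
in the graph with edge relation `E`. -/
def IsPath (E : V → V → Prop) (i j : V) (p : List (V × V)) : Prop :=
  p ≠ [] ∧ (∀ e ∈ p, E e.1 e.2) ∧
  p.head?.map Prod.fst = some i ∧ p.getLast?.map Prod.snd = some j ∧
  p.Chain' (fun e f => e.2 = f.1)

/-- The indirect effect of a path: the minimum edge weight along it. -/
noncomputable def minW (w : V → V → ℝ) (p : List (V × V)) : ℝ :=
  sInf {x | ∃ e ∈ p, w e.1 e.2 = x}

/-- The total causal effect: the maximum over paths from `i` to `j`
of the minimum edge weight along the path. -/
noncomputable def Teff (E : V → V → Prop) (w : V → V → ℝ) (i j : V) : ℝ :=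
  sSup {x | ∃ p, IsPath E i j p ∧ minW w p = x}

/-- `j` is reachable from `i`: some path exists. -/
def Reach (E : V → V → Prop) (i j : V) : Prop := ∃ p, IsPath E i j p

namespace List

variable {α β : Type*} [Preorder β] {f : α → β} {l : List α} {k : ℕ} {a : α}

theorem apply_le_apply_getElem_of_mem_drop (hl : (l.map f).Pairwise (· ≥ ·))
    (hk : k < l.length) (ha : a ∈ l.drop k) : f a ≤ f l[k] := by
  rw [drop_eq_getElem_cons hk, mem_cons] at ha
  rcases ha with rfl | ha
  · exact le_rfl
  · refine (pairwise_map.1 hl).rel_of_mem_take_of_mem_drop ?_ ha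
    rw [← take_append_getElem hk]
    exact mem_append_right _ (mem_singleton_self _)

theorem apply_getElem_le_apply_of_mem_take_succ (hl : (l.map f).Pairwise (· ≥ ·))
    (hk : k < l.length) (ha : a ∈ l.take (k + 1)) : f l[k] ≤ f a := by
  rw [← take_append_getElem hk, mem_append, mem_singleton] at ha
  rcases ha with ha | rfl
  · refine (pairwise_map.1 hl).rel_of_mem_take_of_mem_drop ha ?_
    rw [drop_eq_getElem_cons hk]
    exact mem_cons_self
  · exact le_rfl

end List

section Paths

variable {N : Type*} {E : N → N → Prop} {w : N → N → ℝ} {i j : N} {p q : List (N × N)}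

theorem IsPath.of_forall_mem {E' : N → N → Prop} (hp : IsPath E i j p)
    (h : ∀ e ∈ p, E' e.1 e.2) : IsPath E' i j p :=
  ⟨hp.1, h, hp.2.2⟩

theorem minW_le {e : N × N} (he : e ∈ p) : minW w p ≤ w e.1 e.2 :=
  csInf_le (p.finite_toSet.image fun e : N × N => w e.1 e.2).bddBelow ⟨e, he, rfl⟩

theorem le_minW {c : ℝ} (hp : p ≠ []) (h : ∀ e ∈ p, c ≤ w e.1 e.2) : c ≤ minW w p := by
  obtain ⟨e, he⟩ := List.exists_mem_of_ne_nil p hp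
  exact le_csInf ⟨_, e, he, rfl⟩ (by rintro _ ⟨e, he, rfl⟩; exact h e he)

theorem Teff_eq_minW_of_forall_isPath (hq : IsPath E i j q)
    (h : ∀ p, IsPath E i j p → minW w p ≤ minW w q) : Teff E w i j = minW w q :=
  IsGreatest.csSup_eq ⟨⟨q, hq, rfl⟩, by rintro _ ⟨p, hp, rfl⟩; exact h p hp⟩

variable {L : List (N × N)} {k : ℕ}

theorem minW_le_of_not_reach_take (hL : ∀ a b, E a b → (a, b) ∈ L)
    (hsort : (L.map fun e => w e.1 e.2).Pairwise (· ≥ ·)) (hk : k < L.length)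
    (hnot : ¬ Reach (fun a b => (a, b) ∈ L.take k) i j) (hp : IsPath E i j p) :
    minW w p ≤ w L[k].1 L[k].2 := by
  obtain ⟨e, hep, he⟩ : ∃ e ∈ p, e ∉ L.take k := by
    by_contra! h
    exact hnot ⟨p, hp.of_forall_mem h⟩
  have heL : e ∈ L.take k ++ L.drop k := by
    rw [L.take_append_drop]
    exact hL _ _ (hp.2.1 e hep)
  have he_drop : e ∈ L.drop k := (List.mem_append.1 heL).resolve_left he
  exact (minW_le hep).trans (List.apply_le_apply_getElem_of_mem_drop hsort hk he_drop)

theorem le_minW_of_isPath_take_succ (hsort : (L.map fun e => w e.1 e.2).Pairwise (· ≥ ·))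
    (hk : k < L.length) (hp : IsPath (fun a b => (a, b) ∈ L.take (k + 1)) i j p) :
    w L[k].1 L[k].2 ≤ minW w p :=
  le_minW hp.1 fun e he => List.apply_getElem_le_apply_of_mem_take_succ hsort hk (hp.2.1 e he)

end Paths

theorem stmt3_general (E : V → V → Prop) (w : V → V → ℝ) (i j : V)
    (L : List (V × V)) (hL : ∀ a b, E a b ↔ (a, b) ∈ L)
    (hsort : (L.map fun e => w e.1 e.2).Pairwise (· ≥ ·))
    (k : Fin L.length)
    (hk : Reach (fun a b => (a, b) ∈ L.take ((k : ℕ) + 1)) i j)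
    (hmin : ∀ m ≤ (k : ℕ), ¬ Reach (fun a b => (a, b) ∈ L.take m) i j) :
    Teff E w i j = w (L.get k).1 (L.get k).2 := by
  obtain ⟨q, hq⟩ := hk
  have hqE : IsPath E i j q :=
    hq.of_forall_mem fun e he => (hL _ _).2 (List.mem_of_mem_take (hq.2.1 e he))
  have hbound : ∀ p, IsPath E i j p → minW w p ≤ w (L.get k).1 (L.get k).2 :=
    fun p => minW_le_of_not_reach_take (fun a b => (hL a b).1) hsort k.isLt (hmin k le_rfl)
  have hq_ge : w (L.get k).1 (L.get k).2 ≤ minW w q :=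
    le_minW_of_isPath_take_succ hsort k.isLt hq
  rw [Teff_eq_minW_of_forall_isPath hqE fun p hp => (hbound p hp).trans hq_ge]
  exact le_antisymm (hbound q hqE) hq_ge

theorem stmt3 (E : V → V → Prop) (w : V → V → ℝ) (i j : V)
    (L : List (V × V)) (hL : ∀ a b, E a b ↔ (a, b) ∈ L) (hnd : L.Nodup)
    (hsort : (L.map fun e => w e.1 e.2).Pairwise (· ≥ ·))
    (hreach : Reach E i j)
    (k : Fin L.length)
    (hk : Reach (fun a b => (a, b) ∈ L.take ((k : ℕ) + 1)) i j)
    (hmin : ∀ m ≤ (k : ℕ), ¬ Reach (fun a b => (a, b) ∈ L.take m) i j) :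
    Teff E w i j = w (L.get k).1 (L.get k).2 :=
  stmt3_general E w i j L hL hsort k hk hmin
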